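/- arXiv:math/0402382 — 2 statements merged into one kernel-verified Lean document; each statement's English description precedes it below -/
import Mathlib

section
/- Let 0 < α ≤ 1 and let (c_n)_{n ≥ 1} be complex numbers such that for every ε > 0 there exists a constant C > 0 with |∑_{n=1}^N c_n · n · e(nx)| ≤ C · N^{1+ε−α} for all integers N ≥ 1 and all x ∈ ℝ. Then the series ∑_{n ≥ 1} c_n e(nx) converges uniformly on ℝ to a continuous 1-periodic function f, and for every β with 0 < β < α, f is Hölder continuous of index β. -/
open Complex Filter Finset

/-- `e x = exp(2 π i x)` -/
noncomputable def e (t : ℝ) : ℂ := Complex.exp (2 * Real.pi * Complex.I * t)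

namespace Stmt1Aux

noncomputable def SS (c : ℕ → ℂ) (N : ℕ) (x : ℝ) : ℂ :=
  ∑ n ∈ Finset.Icc 1 N, c n * (n : ℂ) * e ((n : ℝ) * x)

noncomputable def TT (c : ℕ → ℂ) (N : ℕ) (x : ℝ) : ℂ :=
  ∑ n ∈ Finset.Icc 1 N, c n * e ((n : ℝ) * x)

lemma rpow_neg_anti {x y p : ℝ} (hx : 0 < x) (hxy : x ≤ y) (hp : 0 ≤ p) :
    y ^ (-p) ≤ x ^ (-p) := by
  rw [Real.rpow_neg (by linarith), Real.rpow_neg hx.le]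
  exact inv_anti₀ (Real.rpow_pos_of_pos hx p) (Real.rpow_le_rpow hx.le hxy hp)

lemma rpow_neg_sub_ge {δ : ℝ} (hδ : 0 < δ) {a : ℝ} (ha : 1 ≤ a) :
    δ * (a + 1) ^ (-(1 + δ)) ≤ a ^ (-δ) - (a + 1) ^ (-δ) := by
  have ha0 : (0:ℝ) < a := by linarith
  have hab : a < a + 1 := by linarith
  have hderiv : ∀ t ∈ Set.Icc a (a+1), HasDerivAt (fun s : ℝ => s ^ (-δ))
      ((-δ) * t ^ (-δ - 1)) t := by
    intro t ht
    exact Real.hasDerivAt_rpow_const (Or.inl (by nlinarith [ht.1]))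
  obtain ⟨ξ, hξ, hslope⟩ := exists_hasDerivAt_eq_slope (fun s : ℝ => s ^ (-δ))
    (fun t => (-δ) * t ^ (-δ - 1)) hab
    (fun t ht => (hderiv t ht).continuousAt.continuousWithinAt)
    (fun t ht => hderiv t (Set.mem_Icc.2 ⟨ht.1.le, ht.2.le⟩))
  have hden : (a + 1 - a) = 1 := by ring
  rw [hden, div_one] at hslope
  have hξa : a < ξ := hξ.1
  have hξb : ξ < a + 1 := hξ.2
  have hξ0 : (0:ℝ) < ξ := by linarith
  have key : a ^ (-δ) - (a+1) ^ (-δ) = δ * ξ ^ (-δ - 1) := by linarith [hslope]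
  rw [key]
  have hmono : (a + 1) ^ (-δ - 1) ≤ ξ ^ (-δ - 1) := by
    have : (-δ - 1) = -(δ + 1) := by ring
    rw [this]
    exact rpow_neg_anti hξ0 hξb.le (by linarith)
  have : (a + 1) ^ (-(1 + δ)) ≤ ξ ^ (-δ - 1) := by
    rw [show (-(1+δ)) = -δ - 1 by ring]; exact hmono
  nlinarith

lemma sum_telescope_Ioc (g : ℕ → ℝ) (M N : ℕ) (h : M ≤ N) :
    ∑ n ∈ Finset.Ioc M N, (g (n - 1) - g n) = g M - g N := by
  induction N, h using Nat.le_induction with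
  | base => simp
  | succ N hMN ih =>
      rw [Finset.sum_Ioc_succ_top hMN, ih]
      simp only [Nat.add_sub_cancel]
      ring

lemma sum_rpow_tail {δ : ℝ} (hδ : 0 < δ) (M N : ℕ) (hM : 1 ≤ M) :
    ∑ n ∈ Finset.Ioc M N, ((n : ℝ)) ^ (-(1 + δ)) ≤ (1 / δ) * (M : ℝ) ^ (-δ) := by
  rcases le_or_gt N M with hNM | hMN
  · rw [Finset.Ioc_eq_empty (by omega)]
    simp
    positivity
  have step : ∀ n ∈ Finset.Ioc M N, ((n:ℝ)) ^ (-(1+δ)) ≤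
      (1/δ) * (((n-1 : ℕ):ℝ) ^ (-δ) - ((n:ℝ)) ^ (-δ)) := by
    intro n hn
    rw [Finset.mem_Ioc] at hn
    have hn1 : 1 ≤ n - 1 := by omega
    have hcast : ((n - 1 : ℕ) : ℝ) = (n : ℝ) - 1 := by
      have : (1:ℕ) ≤ n := by omega
      push_cast [this]; ring
    have ha : (1:ℝ) ≤ ((n-1 : ℕ) : ℝ) := by exact_mod_cast hn1
    have := rpow_neg_sub_ge hδ ha
    have hplus : ((n-1:ℕ):ℝ) + 1 = (n:ℝ) := by rw [hcast]; ring
    rw [hplus] at this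
    rw [one_div_mul_eq_div, le_div_iff₀ hδ]
    linear_combination this
  set g : ℕ → ℝ := fun k => ((k:ℝ)) ^ (-δ) with hg
  calc ∑ n ∈ Finset.Ioc M N, ((n : ℝ)) ^ (-(1 + δ))
      ≤ ∑ n ∈ Finset.Ioc M N, (1/δ) * (g (n-1) - g n) :=
        Finset.sum_le_sum step
    _ = (1/δ) * ∑ n ∈ Finset.Ioc M N, (g (n-1) - g n) := by
        rw [Finset.mul_sum]
    _ = (1/δ) * (g M - g N) := by
        rw [sum_telescope_Ioc g M N hMN.le]
    _ ≤ (1/δ) * (M : ℝ) ^ (-δ) := by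
        simp only [hg]
        have hN0 : (0:ℝ) ≤ ((N:ℝ)) ^ (-δ) := Real.rpow_nonneg (by positivity) _
        have : (0:ℝ) ≤ 1/δ := by positivity
        nlinarith

lemma abel_id (G : ℕ → ℂ) (M N : ℕ) (h : M ≤ N) :
    ∑ n ∈ Finset.Ioc M (N + 1), (G n - G (n - 1)) * (1 / (n : ℂ)) =
      G (N + 1) * (1 / ((N : ℂ) + 1)) - G M * (1 / ((M : ℂ) + 1))
        + ∑ n ∈ Finset.Ioc M N, G n * (1 / (n : ℂ) - 1 / ((n : ℂ) + 1)) := by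
  induction N, h using Nat.le_induction with
  | base =>
      rw [Finset.sum_Ioc_succ_top le_rfl]
      simp only [Finset.Ioc_self, Finset.sum_empty, Nat.add_sub_cancel, zero_add]
      push_cast
      ring
  | succ N hMN ih =>
      rw [Finset.sum_Ioc_succ_top (by omega : M ≤ N + 1), ih,
        Finset.sum_Ioc_succ_top hMN]
      simp only [Nat.add_sub_cancel]
      push_cast
      have h1 : ((N : ℂ) + 1) ≠ 0 := Nat.cast_add_one_ne_zero N
      have h2 : ((N : ℂ) + 1 + 1) ≠ 0 := by
        have := Nat.cast_add_one_ne_zero (R := ℂ) (N + 1)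
        push_cast at this
        exact this
      field_simp
      ring

lemma SS_diff (c : ℕ → ℂ) (x : ℝ) (n : ℕ) (hn : 1 ≤ n) :
    SS c n x - SS c (n - 1) x = c n * (n : ℂ) * e ((n : ℝ) * x) := by
  obtain ⟨m, rfl⟩ : ∃ m, n = m + 1 := ⟨n - 1, by omega⟩
  rw [SS, SS, Finset.sum_Icc_succ_top (by omega)]
  simp

lemma term_eq (c : ℕ → ℂ) (x : ℝ) (n : ℕ) (hn : 1 ≤ n) :
    c n * e ((n : ℝ) * x) = (SS c n x - SS c (n - 1) x) * (1 / (n : ℂ)) := by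
  rw [SS_diff c x n hn]
  have hne : ((n : ℂ)) ≠ 0 := Nat.cast_ne_zero.2 (by omega)
  field_simp

lemma tail_bound {C δ : ℝ} (c : ℕ → ℂ) (hC : 0 < C) (hδ : 0 < δ)
    (hb : ∀ N : ℕ, 1 ≤ N → ∀ x : ℝ, ‖SS c N x‖ ≤ C * (N : ℝ) ^ (1 - δ)) :
    ∀ M N : ℕ, 1 ≤ M → M ≤ N → ∀ x : ℝ,
      ‖TT c N x - TT c M x‖ ≤ C * (2 + 1 / δ) * (M : ℝ) ^ (-δ) := by
  intro M N hM hMN x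
  have hMpos : (0:ℝ) < M := by exact_mod_cast (by omega : 0 < M)
  have hRHSpos : 0 ≤ C * (2 + 1/δ) * (M:ℝ) ^ (-δ) := by positivity
  rcases eq_or_lt_of_le hMN with rfl | hlt
  · simpa using hRHSpos
  obtain ⟨K, rfl⟩ : ∃ K, N = K + 1 := ⟨N - 1, by omega⟩
  have hMK : M ≤ K := by omega
  set G : ℕ → ℂ := fun k => SS c k x with hG
  have hdiff : TT c (K+1) x - TT c M x = ∑ n ∈ Finset.Ioc M (K+1), c n * e ((n:ℝ) * x) := by
    have hcons := Finset.sum_Ioc_consecutive (fun n => c n * e ((n:ℝ)*x))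
      (Nat.zero_le M) (by omega : M ≤ K+1)
    rw [TT, TT, show (1:ℕ) = 0 + 1 from rfl, Finset.Icc_add_one_left_eq_Ioc, Finset.Icc_add_one_left_eq_Ioc]
    linear_combination -hcons
  have habel : TT c (K+1) x - TT c M x =
      G (K+1) * (1 / ((K : ℂ) + 1)) - G M * (1 / ((M : ℂ) + 1))
        + ∑ n ∈ Finset.Ioc M K, G n * (1 / (n : ℂ) - 1 / ((n : ℂ) + 1)) := by
    rw [hdiff, Finset.sum_congr rfl (fun n hn => term_eq c x n
      (by rw [Finset.mem_Ioc] at hn; omega)), abel_id G M K hMK]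
  have hGdiv : ∀ n : ℕ, 1 ≤ n → ‖G n * (1/(n:ℂ))‖ ≤ C * (n:ℝ) ^ (-δ) := by
    intro n hn
    have hn0 : (0:ℝ) < n := by exact_mod_cast (by omega : 0 < n)
    rw [norm_mul, norm_div, norm_one]
    have hnn : ‖(n:ℂ)‖ = (n:ℝ) := by
      rw [Complex.norm_natCast]
    rw [hnn]
    calc ‖G n‖ * (1/(n:ℝ)) ≤ (C * (n:ℝ)^(1-δ)) * (1/(n:ℝ)) :=
          mul_le_mul_of_nonneg_right (hb n hn x) (by positivity)
      _ = C * (n:ℝ)^(-δ) := by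
          rw [show (1-δ) = -δ + 1 by ring, Real.rpow_add hn0, Real.rpow_one]
          field_simp
  have hA : ‖G (K+1) * (1 / ((K : ℂ) + 1))‖ ≤ C * (M:ℝ) ^ (-δ) := by
    have h1 : ((K:ℂ) + 1) = (((K+1 : ℕ)):ℂ) := by push_cast; ring
    rw [h1]
    refine le_trans (hGdiv (K+1) (by omega)) ?_
    have : ((K+1:ℕ):ℝ) ^ (-δ) ≤ (M:ℝ) ^ (-δ) :=
      rpow_neg_anti hMpos (by exact_mod_cast (by omega : M ≤ K+1)) hδ.le
    nlinarith
  have hB : ‖G M * (1 / ((M : ℂ) + 1))‖ ≤ C * (M:ℝ) ^ (-δ) := by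
    rw [norm_mul, norm_div, norm_one]
    have hMc : ‖(M:ℂ) + 1‖ = (M:ℝ) + 1 := by
      rw [show ((M:ℂ)+1) = (((M+1:ℕ)):ℂ) by push_cast; ring, Complex.norm_natCast]
      push_cast; ring
    rw [hMc]
    have hbM := hb M hM x
    have hle : ‖G M‖ * (1 / ((M:ℝ)+1)) ≤ (C * (M:ℝ)^(1-δ)) * (1/(M:ℝ)) := by
      apply mul_le_mul (hbM) _ (by positivity) (by positivity)
      apply one_div_le_one_div_of_le hMpos (by linarith)
    refine hle.trans (le_of_eq ?_)
    rw [show (1-δ) = -δ + 1 by ring, Real.rpow_add hMpos, Real.rpow_one]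
    field_simp
  have hS : ‖∑ n ∈ Finset.Ioc M K, G n * (1 / (n : ℂ) - 1 / ((n : ℂ) + 1))‖
      ≤ C * (1/δ) * (M:ℝ) ^ (-δ) := by
    calc ‖∑ n ∈ Finset.Ioc M K, G n * (1 / (n : ℂ) - 1 / ((n : ℂ) + 1))‖
        ≤ ∑ n ∈ Finset.Ioc M K, ‖G n * (1 / (n : ℂ) - 1 / ((n : ℂ) + 1))‖ :=
          norm_sum_le _ _
      _ ≤ ∑ n ∈ Finset.Ioc M K, C * ((n:ℝ)) ^ (-(1 + δ)) := by
          apply Finset.sum_le_sum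
          intro n hn
          rw [Finset.mem_Ioc] at hn
          have hn1 : 1 ≤ n := by omega
          have hn0 : (0:ℝ) < n := by exact_mod_cast (by omega : 0 < n)
          rw [norm_mul]
          have hval : (1 / (n : ℂ) - 1 / ((n : ℂ) + 1)) =
              (((1 / (n:ℝ) - 1 / ((n:ℝ)+1)) : ℝ) : ℂ) := by push_cast; ring
          have hnonneg : (0:ℝ) ≤ 1 / (n:ℝ) - 1 / ((n:ℝ)+1) := by
            have := one_div_le_one_div_of_le hn0 (by linarith : (n:ℝ) ≤ (n:ℝ)+1)
            linarith
          rw [hval, Complex.norm_real, Real.norm_eq_abs, _root_.abs_of_nonneg hnonneg]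
          have hGb := hb n hn1 x
          have hsmall : 1 / (n:ℝ) - 1 / ((n:ℝ)+1) ≤ 1/(n:ℝ) * (1/(n:ℝ)) := by
            have h1 : 1 / (n:ℝ) - 1 / ((n:ℝ)+1) = 1 / ((n:ℝ) * ((n:ℝ)+1)) := by
              field_simp
              ring
            rw [h1, div_mul_div_comm, one_mul]
            exact one_div_le_one_div_of_le (by positivity) (by nlinarith)
          calc ‖G n‖ * (1 / (n:ℝ) - 1 / ((n:ℝ)+1))
              ≤ (C * (n:ℝ)^(1-δ)) * (1/(n:ℝ) * (1/(n:ℝ))) := by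
                apply mul_le_mul hGb hsmall hnonneg (by positivity)
            _ = C * ((n:ℝ)) ^ (-(1 + δ)) := by
                rw [show -(1+δ) = (1-δ) + (-1) + (-1) by ring,
                  Real.rpow_add hn0, Real.rpow_add hn0, Real.rpow_neg_one]
                ring
      _ = C * ∑ n ∈ Finset.Ioc M K, ((n:ℝ)) ^ (-(1 + δ)) := by rw [← Finset.mul_sum]
      _ ≤ C * ((1/δ) * (M:ℝ) ^ (-δ)) :=
          mul_le_mul_of_nonneg_left (sum_rpow_tail hδ M K hM) hC.le
      _ = C * (1/δ) * (M:ℝ) ^ (-δ) := by ring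
  rw [habel]
  calc ‖G (K+1) * (1 / ((K : ℂ) + 1)) - G M * (1 / ((M : ℂ) + 1))
        + ∑ n ∈ Finset.Ioc M K, G n * (1 / (n : ℂ) - 1 / ((n : ℂ) + 1))‖
      ≤ ‖G (K+1) * (1 / ((K : ℂ) + 1))‖ + ‖G M * (1 / ((M : ℂ) + 1))‖
        + ‖∑ n ∈ Finset.Ioc M K, G n * (1 / (n : ℂ) - 1 / ((n : ℂ) + 1))‖ := by
        refine le_trans (norm_add_le _ _) ?_
        have := norm_sub_le (G (K+1) * (1 / ((K : ℂ) + 1))) (G M * (1 / ((M : ℂ) + 1)))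
        linarith
    _ ≤ C * (M:ℝ)^(-δ) + C * (M:ℝ)^(-δ) + C * (1/δ) * (M:ℝ)^(-δ) := by linarith
    _ = C * (2 + 1/δ) * (M:ℝ)^(-δ) := by ring

lemma TT_hasDerivAt (c : ℕ → ℂ) (N : ℕ) (x : ℝ) :
    HasDerivAt (fun t => TT c N t) (2 * Real.pi * Complex.I * SS c N x) x := by
  have h : ∀ n ∈ Finset.Icc 1 N, HasDerivAt (fun t : ℝ => c n * e ((n : ℝ) * t))
      (2 * Real.pi * Complex.I * (c n * (n : ℂ) * e ((n : ℝ) * x))) x := by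
    intro n _
    have h1 : HasDerivAt (fun t : ℝ => (((n : ℝ) * t : ℝ) : ℂ)) ((n : ℝ) : ℂ) x := by
      have := ((hasDerivAt_id x).const_mul (n : ℝ)).ofReal_comp
      simpa using this
    have h2 : HasDerivAt (fun t : ℝ => 2 * (Real.pi : ℂ) * Complex.I * (((n : ℝ) * t : ℝ) : ℂ))
        (2 * (Real.pi : ℂ) * Complex.I * ((n : ℝ) : ℂ)) x :=
      h1.const_mul _
    have h3 := h2.cexp
    have h4 := h3.const_mul (c n)
    have : (fun t : ℝ => c n * Complex.exp (2 * (Real.pi:ℂ) * Complex.I * (((n:ℝ) * t : ℝ) : ℂ)))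
        = fun t : ℝ => c n * e ((n : ℝ) * t) := by
      funext t; rw [e]
    rw [this] at h4
    convert h4 using 1
    · rfl
    rw [e]
    push_cast
    ring
  have hsum := HasDerivAt.sum h
  have : (fun t => TT c N t) = fun t => ∑ n ∈ Finset.Icc 1 N, c n * e ((n : ℝ) * t) := rfl
  rw [this]
  convert hsum using 1
  · rfl
  · funext t; rw [Finset.sum_apply]
  rw [SS, Finset.mul_sum]

lemma TT_lip {c : ℕ → ℂ} {N : ℕ} {K : ℝ} (hK : ∀ t : ℝ, ‖SS c N t‖ ≤ K) (x y : ℝ) :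
    ‖TT c N x - TT c N y‖ ≤ 2 * Real.pi * K * |x - y| := by
  have hbound : ∀ t : ℝ, t ∈ (Set.univ : Set ℝ) →
      ‖2 * Real.pi * Complex.I * SS c N t‖ ≤ 2 * Real.pi * K := by
    intro t _
    rw [norm_mul]
    have h1 : ‖(2 * Real.pi * Complex.I : ℂ)‖ = 2 * Real.pi := by
      rw [norm_mul, norm_mul, Complex.norm_I]
      simp [Real.pi_pos.le, _root_.abs_of_nonneg]
    rw [h1]
    have := hK t
    nlinarith [Real.pi_pos]
  have := Convex.norm_image_sub_le_of_norm_hasDerivWithin_le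
    (f := fun t => TT c N t) (f' := fun t => 2 * Real.pi * Complex.I * SS c N t)
    (fun t _ => (TT_hasDerivAt c N t).hasDerivWithinAt) hbound convex_univ
    (Set.mem_univ y) (Set.mem_univ x)
  simpa [Real.norm_eq_abs] using this

lemma TT_continuous (c : ℕ → ℂ) (N : ℕ) : Continuous (fun t => TT c N t) :=
  continuous_iff_continuousAt.2 fun x => (TT_hasDerivAt c N x).continuousAt

lemma TT_periodic (c : ℕ → ℂ) (N : ℕ) (x : ℝ) : TT c N (x + 1) = TT c N x := by
  rw [TT, TT]
  apply Finset.sum_congr rfl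
  intro n _
  congr 1
  rw [e, e]
  have : ((n : ℝ) * (x + 1) : ℝ) = ((n : ℝ) * x) + (n : ℝ) := by ring
  rw [this]
  push_cast
  rw [mul_add, Complex.exp_add]
  have h1 : Complex.exp (2 * (Real.pi:ℂ) * Complex.I * (n : ℂ)) = 1 := by
    have := Complex.exp_int_mul_two_pi_mul_I (n : ℤ)
    push_cast at this
    rw [← this]
    ring_nf
  rw [h1, mul_one]

end Stmt1Aux

/-- Theorem 3, implication d) ⇒ b), case k = 1, 0 < α ≤ 1. -/
theorem stmt_1 (α : ℝ) (hα0 : 0 < α) (hα1 : α ≤ 1) (c : ℕ → ℂ)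
    (hbound : ∀ ε > (0:ℝ), ∃ C > (0:ℝ), ∀ N : ℕ, 1 ≤ N → ∀ x : ℝ,
      ‖∑ n ∈ Finset.Icc 1 N, c n * (n : ℂ) * e ((n : ℝ) * x)‖
        ≤ C * (N : ℝ) ^ (1 + ε - α)) :
    ∃ f : ℝ → ℂ,
      TendstoUniformly (fun N x => ∑ n ∈ Finset.Icc 1 N, c n * e ((n : ℝ) * x))
        f Filter.atTop ∧
      Continuous f ∧ Function.Periodic f 1 ∧
      ∀ β : ℝ, 0 < β → β < α → ∃ C > (0:ℝ), ∀ x y : ℝ,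
        ‖f x - f y‖ ≤ C * |x - y| ^ β := by
  classical
  open Stmt1Aux in
  have hbS : ∀ δ : ℝ, 0 < δ → δ < α → ∃ C > (0:ℝ), ∀ N : ℕ, 1 ≤ N → ∀ x : ℝ,
      ‖Stmt1Aux.SS c N x‖ ≤ C * (N : ℝ) ^ (1 - δ) := by
    intro δ hδ0 hδα
    obtain ⟨C, hC, hCb⟩ := hbound (α - δ) (by linarith)
    refine ⟨C, hC, fun N hN x => ?_⟩
    have := hCb N hN x
    rw [show 1 + (α - δ) - α = 1 - δ by ring] at this
    exact this
  obtain ⟨C₁, hC₁, hb₁⟩ := hbS (α/2) (by linarith) (by linarith)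
  have hδ₁ : (0:ℝ) < α/2 := by linarith
  have tail₁ := Stmt1Aux.tail_bound c hC₁ hδ₁ hb₁
  set D₁ := C₁ * (2 + 1/(α/2)) with hD₁def
  have hdecay : Tendsto (fun N : ℕ => D₁ * (N:ℝ) ^ (-(α/2))) atTop (nhds 0) := by
    have h1 : Tendsto (fun N : ℕ => ((N:ℝ)) ^ (-(α/2))) atTop (nhds 0) :=
      (tendsto_rpow_neg_atTop (by linarith)).comp tendsto_natCast_atTop_atTop
    simpa using h1.const_mul D₁
  have hcauchy : ∀ x, CauchySeq (fun N => Stmt1Aux.TT c N x) := by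
    intro x
    rw [Metric.cauchySeq_iff']
    intro ε hε
    obtain ⟨N₀, hN₀⟩ := ((hdecay.eventually (gt_mem_nhds hε)).and
      (eventually_ge_atTop 1)).exists
    refine ⟨N₀, fun n hn => ?_⟩
    rw [dist_eq_norm]
    exact lt_of_le_of_lt (tail₁ N₀ n hN₀.2 hn x) hN₀.1
  set f : ℝ → ℂ := fun x => limUnder atTop (fun N => Stmt1Aux.TT c N x) with hfdef
  have htend : ∀ x, Tendsto (fun N => Stmt1Aux.TT c N x) atTop (nhds (f x)) :=
    fun x => (hcauchy x).tendsto_limUnder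
  have hlim : ∀ (D δ' : ℝ),
      (∀ M N : ℕ, 1 ≤ M → M ≤ N → ∀ x, ‖Stmt1Aux.TT c N x - Stmt1Aux.TT c M x‖
        ≤ D * (M:ℝ)^(-δ')) →
      ∀ M : ℕ, 1 ≤ M → ∀ x, ‖f x - Stmt1Aux.TT c M x‖ ≤ D * (M:ℝ)^(-δ') := by
    intro D δ' htail M hM x
    have h1 : Tendsto (fun N => ‖Stmt1Aux.TT c N x - Stmt1Aux.TT c M x‖) atTop
        (nhds ‖f x - Stmt1Aux.TT c M x‖) :=
      ((htend x).sub tendsto_const_nhds).norm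
    apply le_of_tendsto h1
    filter_upwards [eventually_ge_atTop M] with N hN
    exact htail M N hM hN x
  have huc : TendstoUniformly (fun N x => Stmt1Aux.TT c N x) f atTop := by
    rw [Metric.tendstoUniformly_iff]
    intro ε hε
    filter_upwards [hdecay.eventually (gt_mem_nhds hε), eventually_ge_atTop 1]
      with N h1 h2
    intro x
    rw [dist_eq_norm]
    exact lt_of_le_of_lt (hlim D₁ (α/2) tail₁ N h2 x) h1
  refine ⟨f, huc, huc.continuous (Eventually.of_forall fun N =>
    Stmt1Aux.TT_continuous c N).frequently, ?_, ?_⟩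
  · intro x
    have h1 : Tendsto (fun N => Stmt1Aux.TT c N (x+1)) atTop (nhds (f x)) := by
      refine (htend x).congr fun N => ?_
      exact (Stmt1Aux.TT_periodic c N x).symm
    exact tendsto_nhds_unique (htend (x+1)) h1
  · intro β hβ0 hβα
    obtain ⟨C₂, hC₂, hb₂⟩ := hbS β hβ0 hβα
    have hβ1 : β ≤ 1 := le_trans hβα.le hα1
    set D₂ := C₂ * (2 + 1/β) with hD₂def
    have hD₂ : 0 < D₂ := by positivity
    have tail₂ := Stmt1Aux.tail_bound c hC₂ hβ0 hb₂
    have ftail₂ := hlim D₂ β tail₂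
    -- bound on f
    have hfb : ∀ x, ‖f x‖ ≤ D₂ + C₂ := by
      intro x
      have h1 := ftail₂ 1 le_rfl x
      rw [Nat.cast_one, Real.one_rpow, mul_one] at h1
      have h2 : ‖Stmt1Aux.TT c 1 x‖ ≤ C₂ := by
        have h3 := hb₂ 1 le_rfl x
        rw [Nat.cast_one, Real.one_rpow, mul_one] at h3
        have hTS : Stmt1Aux.TT c 1 x = Stmt1Aux.SS c 1 x := by
          simp [Stmt1Aux.TT, Stmt1Aux.SS]
        rw [hTS]
        exact h3
      calc ‖f x‖ = ‖(f x - Stmt1Aux.TT c 1 x) + Stmt1Aux.TT c 1 x‖ := by ring_nf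
        _ ≤ ‖f x - Stmt1Aux.TT c 1 x‖ + ‖Stmt1Aux.TT c 1 x‖ := norm_add_le _ _
        _ ≤ D₂ + C₂ := add_le_add h1 h2
    refine ⟨2*(D₂ + C₂) + 2*D₂ + 4*Real.pi*C₂ + 1, by positivity, ?_⟩
    intro x y
    set d := |x - y| with hd
    have hd0 : 0 ≤ d := abs_nonneg _
    rcases eq_or_lt_of_le hd0 with h0 | hdpos
    · have hxy : x = y := by
        have := h0.symm
        rw [hd] at this
        rwa [abs_eq_zero, sub_eq_zero] at this
      subst hxy
      simp [← hd, ← h0, Real.zero_rpow (ne_of_gt hβ0)]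
    rcases le_or_gt 1 d with hbig | hsmall
    · have hb1 : 1 ≤ d ^ β := Real.one_le_rpow hbig hβ0.le
      have h2B : ‖f x - f y‖ ≤ 2*(D₂+C₂) := by
        calc ‖f x - f y‖ ≤ ‖f x‖ + ‖f y‖ := norm_sub_le _ _
          _ ≤ 2*(D₂+C₂) := by linarith [hfb x, hfb y]
      have hcoef : (0:ℝ) ≤ 2*(D₂+C₂) + 2*D₂ + 4*Real.pi*C₂ + 1 := by positivity
      calc ‖f x - f y‖ ≤ 2*(D₂+C₂) := h2B
        _ = 2*(D₂+C₂) * 1 := by ring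
        _ ≤ (2*(D₂ + C₂) + 2*D₂ + 4*Real.pi*C₂ + 1) * d ^ β := by
            apply mul_le_mul (by nlinarith [Real.pi_pos]) hb1 (by norm_num) hcoef
    · -- 0 < d < 1
      set M := ⌈1/d⌉₊ with hMdef
      have h1d : (1:ℝ) ≤ 1/d := by rw [le_div_iff₀ hdpos]; linarith
      have hMge : 1/d ≤ (M:ℝ) := Nat.le_ceil _
      have hMr : (1:ℝ) ≤ (M:ℝ) := le_trans h1d hMge
      have hM1 : 1 ≤ M := by exact_mod_cast hMr
      have hMle : (M:ℝ) ≤ 2/d := by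
        have ha := Nat.ceil_lt_add_one (by positivity : (0:ℝ) ≤ 1/d)
        have hb : 1/d + 1 ≤ 2/d := by
          rw [show (2:ℝ)/d = 1/d + 1/d by ring]; linarith
        linarith
      have hMpos : (0:ℝ) < M := by linarith
      have t1 : ‖f x - Stmt1Aux.TT c M x‖ ≤ D₂ * (M:ℝ)^(-β) := ftail₂ M hM1 x
      have t2 : ‖f y - Stmt1Aux.TT c M y‖ ≤ D₂ * (M:ℝ)^(-β) := ftail₂ M hM1 y
      have lip := Stmt1Aux.TT_lip (fun t => hb₂ M hM1 t) x y
      rw [← hd] at lip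
      have e1 : (M:ℝ)^(-β) ≤ d^β := by
        have h1 := Stmt1Aux.rpow_neg_anti (x := 1/d) (y := (M:ℝ))
          (by positivity) hMge hβ0.le
        have h2 : (1/d)^(-β) = d^β := by
          rw [one_div, Real.rpow_neg (by positivity), Real.inv_rpow hdpos.le, inv_inv]
        rw [h2] at h1
        exact h1
      have e2 : (M:ℝ)^(1-β) * d ≤ 2 * d^β := by
        have s1 : (M:ℝ)^(1-β) ≤ (2/d)^(1-β) :=
          Real.rpow_le_rpow (by positivity) hMle (by linarith)
        have s2 : (2/d)^(1-β) * d = 2^(1-β) * d^β := by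
          rw [Real.div_rpow (by norm_num) hdpos.le, div_mul_eq_mul_div,
            div_eq_iff (ne_of_gt (Real.rpow_pos_of_pos hdpos _)), mul_assoc,
            ← Real.rpow_add hdpos, show β + (1-β) = 1 by ring, Real.rpow_one]
        have s3 : (2:ℝ)^(1-β) ≤ 2 := by
          calc (2:ℝ)^(1-β) ≤ (2:ℝ)^(1:ℝ) :=
              Real.rpow_le_rpow_of_exponent_le (by norm_num) (by linarith)
            _ = 2 := Real.rpow_one 2
        have hdb0 : 0 ≤ d ^ β := Real.rpow_nonneg hd0 _
        nlinarith
      have hsplit : ‖f x - f y‖ ≤ ‖f x - Stmt1Aux.TT c M x‖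
          + ‖Stmt1Aux.TT c M x - Stmt1Aux.TT c M y‖ + ‖f y - Stmt1Aux.TT c M y‖ := by
        have heq : f x - f y = (f x - Stmt1Aux.TT c M x)
            + (Stmt1Aux.TT c M x - Stmt1Aux.TT c M y)
            + -(f y - Stmt1Aux.TT c M y) := by ring
        rw [heq]
        refine le_trans (norm_add_le _ _) ?_
        rw [norm_neg]
        have := norm_add_le (f x - Stmt1Aux.TT c M x)
          (Stmt1Aux.TT c M x - Stmt1Aux.TT c M y)
        linarith
      have hdb0 : 0 ≤ d ^ β := Real.rpow_nonneg hd0 _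
      have lip2 : ‖Stmt1Aux.TT c M x - Stmt1Aux.TT c M y‖
          ≤ 2 * Real.pi * C₂ * (2 * d^β) := by
        refine le_trans lip ?_
        have hpi : (0:ℝ) < Real.pi := Real.pi_pos
        calc 2 * Real.pi * (C₂ * (M:ℝ)^(1-β)) * d
            = 2 * Real.pi * C₂ * ((M:ℝ)^(1-β) * d) := by ring
          _ ≤ 2 * Real.pi * C₂ * (2 * d^β) := by
              apply mul_le_mul_of_nonneg_left e2 (by positivity)
      have hD2e : D₂ * (M:ℝ)^(-β) ≤ D₂ * d^β :=
        mul_le_mul_of_nonneg_left e1 hD₂.le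
      calc ‖f x - f y‖ ≤ ‖f x - Stmt1Aux.TT c M x‖
          + ‖Stmt1Aux.TT c M x - Stmt1Aux.TT c M y‖
          + ‖f y - Stmt1Aux.TT c M y‖ := hsplit
        _ ≤ D₂ * d^β + 2 * Real.pi * C₂ * (2 * d^β) + D₂ * d^β := by
            linarith [le_trans t1 hD2e, le_trans t2 hD2e, lip2]
        _ ≤ (2*(D₂ + C₂) + 2*D₂ + 4*Real.pi*C₂ + 1) * d ^ β := by
            nlinarith [Real.pi_pos, hC₂, hD₂]
end

section
/- Let 0 < α < β ≤ 1 and let f : ℝ → ℂ be a 1-periodic function which is Hölder continuous of index β, with Fourier coefficients c_n = ∫₀¹ f(t) e(−nt) dt. Then ∑_{n ≠ 0} |n|^{2α} |c_n|² < ∞. -/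
open Complex Filter Finset
open scoped ENNReal NNReal
open MeasureTheory
set_option maxHeartbeats 1000000

lemma e_add (s t : ℝ) : e (s + t) = e s * e t := by
  simp [e, ← Complex.exp_add]; ring_nf

lemma e_int (n : ℤ) : e n = 1 := by
  simp only [e]
  push_cast
  rw [show 2 * (Real.pi:ℂ) * Complex.I * (n:ℂ) = (n:ℂ) * (2 * Real.pi * Complex.I) by ring]
  exact Complex.exp_int_mul_two_pi_mul_I n

@[continuity, fun_prop]
lemma e_continuous : Continuous e := by
  unfold e; fun_prop

lemma e_re (t : ℝ) : (e t).re = Real.cos (2 * Real.pi * t) := by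
  rw [e, show 2 * (Real.pi:ℂ) * Complex.I * t = (2 * Real.pi * t : ℝ) * Complex.I by push_cast; ring]
  exact Complex.exp_ofReal_mul_I_re _

lemma cont_of_holder {f : ℝ → ℂ} {C β : ℝ} (hβ : 0 < β)
    (h : ∀ x y, ‖f x - f y‖ ≤ C * |x - y| ^ β) : Continuous f := by
  have hH : HolderWith C.toNNReal β.toNNReal f := by
    intro x y
    rw [edist_dist, edist_dist, Real.dist_eq]
    calc ENNReal.ofReal (dist (f x) (f y)) ≤ ENNReal.ofReal (C * |x - y| ^ β) :=
          ENNReal.ofReal_le_ofReal (by simpa [dist_eq_norm] using h x y)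
      _ = ENNReal.ofReal C * ENNReal.ofReal (|x - y| ^ β) := by
          rw [ENNReal.ofReal_mul']; positivity
      _ = (C.toNNReal : ℝ≥0∞) * ENNReal.ofReal |x - y| ^ (β.toNNReal : ℝ) := by
          rw [← ENNReal.ofReal_rpow_of_nonneg (abs_nonneg _) hβ.le]
          simp [Real.coe_toNNReal β hβ.le, ENNReal.ofReal]
  exact hH.continuous (by simpa using hβ)

lemma cont_lift {g : ℝ → ℂ} (hper : Function.Periodic g 1) (hg : Continuous g) :
    Continuous (hper.lift : AddCircle (1:ℝ) → ℂ) :=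
  hg.quotient_liftOn' _

lemma fourierCoeff_lift_eq {g : ℝ → ℂ} (hper : Function.Periodic g 1) (n : ℤ) :
    fourierCoeff (hper.lift : AddCircle (1:ℝ) → ℂ) n = ∫ t in (0:ℝ)..1, g t * e (-(n:ℝ) * t) := by
  rw [fourierCoeff_eq_intervalIntegral _ n 0]
  simp only [zero_add, smul_eq_mul]
  norm_num only
  rw [one_smul]
  apply intervalIntegral.integral_congr
  intro t ht
  simp only [Function.Periodic.lift_coe, fourier_coe_apply, e]
  push_cast
  rw [mul_comm]
  congr 1
  ring

lemma parseval {g : ℝ → ℂ} (hg : Continuous g) (hper : Function.Periodic g 1) :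
    Summable (fun n : ℤ => ‖fourierCoeff (hper.lift : AddCircle (1:ℝ) → ℂ) n‖^2) ∧
    ∑' n : ℤ, ‖fourierCoeff (hper.lift : AddCircle (1:ℝ) → ℂ) n‖^2
      = ∫ t in (0:ℝ)..1, ‖g t‖^2 := by
  set G : C(AddCircle (1:ℝ), ℂ) := ⟨hper.lift, cont_lift hper hg⟩ with hG
  set F := ContinuousMap.toLp (E := ℂ) 2 AddCircle.haarAddCircle ℂ G with hF
  have h1 : ∀ n, fourierCoeff (hper.lift : AddCircle (1:ℝ) → ℂ) n
      = fourierCoeff (F : AddCircle (1:ℝ) → ℂ) n := fun n => (fourierCoeff_toLp G n).symm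
  have hsum : Summable (fun n : ℤ => ‖fourierCoeff (F : AddCircle (1:ℝ) → ℂ) n‖^2) := by
    have hm : Memℓp (fun i => fourierBasis.repr F i) 2 := lp.memℓp (fourierBasis.repr F)
    have := (memℓp_gen_iff (p := 2) (by norm_num)).1 hm
    simp only [ENNReal.toReal_ofNat] at this
    have h2 : ∀ i : ℤ, ‖fourierBasis.repr F i‖ ^ (2:ℝ) = ‖fourierCoeff (F : AddCircle (1:ℝ) → ℂ) i‖ ^ 2 := by
      intro i
      rw [fourierBasis_repr]
      rw [← Real.rpow_natCast (‖fourierCoeff (F : AddCircle (1:ℝ) → ℂ) i‖) 2]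
      norm_num
    exact this.congr h2
  have hint : (∫ t : AddCircle (1:ℝ), ‖(F : AddCircle (1:ℝ) → ℂ) t‖^2 ∂AddCircle.haarAddCircle)
      = ∫ t in (0:ℝ)..1, ‖g t‖^2 := by
    have hae : (F : AddCircle (1:ℝ) → ℂ) =ᵐ[AddCircle.haarAddCircle] ⇑G :=
      ContinuousMap.coeFn_toLp _ _
    have hae2 : (fun t => ‖(F : AddCircle (1:ℝ) → ℂ) t‖^2)
        =ᵐ[AddCircle.haarAddCircle] (fun t => ‖G t‖^2) := hae.mono fun x hx => by simp [hx]
    rw [integral_congr_ae hae2]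
    have hvol : (volume : Measure (AddCircle (1:ℝ)))
        = (AddCircle.haarAddCircle : Measure (AddCircle (1:ℝ))) := by
      rw [AddCircle.volume_eq_smul_haarAddCircle, ENNReal.ofReal_one, one_smul]
    have := AddCircle.intervalIntegral_preimage 1 0 (fun z : AddCircle (1:ℝ) => ‖G z‖^2)
    rw [hvol] at this
    rw [← this]
    norm_num
    rfl
  constructor
  · simpa [← h1] using hsum
  · rw [← hint]
    simp only [h1]
    exact tsum_sq_fourierCoeff F

/-- First part of S. Bernstein's theorem (Corollary to Theorem 3):
if `f` is Hölder of index `β > α`, then `∑_{n ≠ 0} |n|^{2α} |c_n|² < ∞`. -/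
theorem stmt_5 (α β : ℝ) (hα : 0 < α) (hαβ : α < β) (hβ : β ≤ 1)
    (f : ℝ → ℂ) (hper : Function.Periodic f 1)
    (hHolder : ∃ C > (0:ℝ), ∀ x y : ℝ, ‖f x - f y‖ ≤ C * |x - y| ^ β)
    (c : ℤ → ℂ)
    (hc : ∀ n : ℤ, c n = ∫ t in (0:ℝ)..1, f t * e (-(n : ℝ) * t)) :
    Summable (fun n : {n : ℤ // n ≠ 0} =>
      ((|n.1| : ℤ) : ℝ) ^ (2 * α) * ‖c n.1‖ ^ 2) := by
  obtain ⟨C, hC0, hHol⟩ := hHolder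
  have hβ0 : (0:ℝ) < β := lt_trans hα hαβ
  have hfc : Continuous f := cont_of_holder hβ0 hHol
  set a : ℝ := (2:ℝ) ^ (2*α) with ha
  set b : ℝ := (2:ℝ) ^ (2*β) with hb
  have ha0 : 0 < a := Real.rpow_pos_of_pos two_pos _
  have hb0 : 0 < b := Real.rpow_pos_of_pos two_pos _
  have keya : ∀ m : ℕ, ((2:ℝ)^m) ^ (2*α) = a ^ m := by
    intro m
    rw [← Real.rpow_natCast (2:ℝ) m, ← Real.rpow_mul (by norm_num : (0:ℝ) ≤ 2),
      mul_comm (m:ℝ) (2*α), Real.rpow_mul (by norm_num : (0:ℝ) ≤ 2), Real.rpow_natCast]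
  have keyb : ∀ m : ℕ, ((2:ℝ)^m) ^ (2*β) = b ^ m := by
    intro m
    rw [← Real.rpow_natCast (2:ℝ) m, ← Real.rpow_mul (by norm_num : (0:ℝ) ≤ 2),
      mul_comm (m:ℝ) (2*β), Real.rpow_mul (by norm_num : (0:ℝ) ≤ 2), Real.rpow_natCast]
  set q : ℝ := a / b with hq
  have hq0 : 0 < q := div_pos ha0 hb0
  have hq1 : q < 1 := by
    rw [hq, div_lt_one hb0]
    exact Real.rpow_lt_rpow_left_iff (by norm_num : (1:ℝ) < 2) |>.mpr (by linarith)
  -- the per-block estimate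
  have block : ∀ j : ℕ, ∀ v : Finset {n : ℤ // n ≠ 0},
      (∀ n ∈ v, Nat.log 2 n.1.natAbs = j) →
      ∑ n ∈ v, ((|n.1| : ℤ) : ℝ) ^ (2 * α) * ‖c n.1‖ ^ 2 ≤ (a * C^2) * q ^ j := by
    intro j v hv
    set h : ℝ := ((3:ℝ) * 2 ^ j)⁻¹ with hh
    have hh0 : 0 < h := by positivity
    set g : ℝ → ℂ := fun t => f (t + h) - f t with hgdef
    have hgper : Function.Periodic g 1 := by
      intro t
      simp only [hgdef]
      rw [show t + 1 + h = (t + h) + 1 by ring, hper (t+h), hper t]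
    have hgc : Continuous g := by
      apply Continuous.sub _ hfc
      exact hfc.comp (by continuity)
    -- coefficients of g
    have hd : ∀ n : ℤ, fourierCoeff (hgper.lift : AddCircle (1:ℝ) → ℂ) n
        = (e ((n:ℝ) * h) - 1) * c n := by
      intro n
      rw [fourierCoeff_lift_eq hgper n]
      have hsub : (∫ t in (0:ℝ)..1, g t * e (-(n:ℝ) * t))
          = (∫ t in (0:ℝ)..1, f (t + h) * e (-(n:ℝ) * t))
            - ∫ t in (0:ℝ)..1, f t * e (-(n:ℝ) * t) := by
        rw [← intervalIntegral.integral_sub]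
        · apply intervalIntegral.integral_congr
          intro t ht
          simp only [hgdef]
          ring
        · exact ((hfc.comp (by continuity)).mul (by fun_prop)).intervalIntegrable _ _
        · exact (hfc.mul (by fun_prop)).intervalIntegrable _ _
      rw [hsub]
      have hA : (∫ t in (0:ℝ)..1, f (t + h) * e (-(n:ℝ) * t))
          = e ((n:ℝ) * h) * ∫ t in (0:ℝ)..1, f t * e (-(n:ℝ) * t) := by
        have step1 : ∀ t : ℝ, f (t + h) * e (-(n:ℝ) * t)
            = e ((n:ℝ) * h) * (f (t + h) * e (-(n:ℝ) * (t + h))) := by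
          intro t
          have : e (-(n:ℝ) * t) = e ((n:ℝ) * h) * e (-(n:ℝ) * (t + h)) := by
            rw [← e_add]
            congr 1
            ring
          rw [this]; ring
        rw [intervalIntegral.integral_congr
          (g := fun t => e ((n:ℝ) * h) * (f (t + h) * e (-(n:ℝ) * (t + h)))) (fun t _ => step1 t)]
        rw [intervalIntegral.integral_const_mul]
        congr 1
        -- change of variables and periodicity
        have hφper : Function.Periodic (fun s => f s * e (-(n:ℝ) * s)) 1 := by
          intro s
          show f (s + 1) * e (-(n:ℝ) * (s + 1)) = f s * e (-(n:ℝ) * s)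
          rw [hper s, show -(n:ℝ) * (s + 1) = (-(n:ℝ) * s) + ((-n : ℤ) : ℝ) by push_cast; ring,
            e_add, e_int (-n)]
          ring
        have hcv := intervalIntegral.integral_comp_add_right (a := (0:ℝ)) (b := 1)
          (fun s => f s * e (-(n:ℝ) * s)) h
        rw [hcv]
        have := hφper.intervalIntegral_add_eq h 0
        simpa [zero_add, add_comm] using this
      rw [hA, ← hc n]
      ring
    obtain ⟨hsum, htsum⟩ := parseval hgc hgper
    -- integral bound
    have hib : (∫ t in (0:ℝ)..1, ‖g t‖^2) ≤ C^2 * h ^ (2*β) := by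
      have hbd : ∀ t ∈ Set.Icc (0:ℝ) 1, ‖g t‖^2 ≤ C^2 * h ^ (2*β) := by
        intro t _
        have h1 : ‖g t‖ ≤ C * h ^ β := by
          have := hHol (t + h) t
          simpa [hgdef, abs_of_pos hh0] using this
        have h2 : ‖g t‖^2 ≤ (C * h ^ β)^2 := by
          apply pow_le_pow_left₀ (norm_nonneg _) h1
        calc ‖g t‖^2 ≤ (C * h ^ β)^2 := h2
          _ = C^2 * h ^ (2*β) := by
            rw [mul_pow, ← Real.rpow_natCast (h ^ β) 2, ← Real.rpow_mul hh0.le]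
            norm_num [mul_comm]
      calc (∫ t in (0:ℝ)..1, ‖g t‖^2) ≤ ∫ _ in (0:ℝ)..1, C^2 * h ^ (2*β) := by
            apply intervalIntegral.integral_mono_on (by norm_num)
            · exact (by fun_prop : Continuous fun t => ‖g t‖^2).intervalIntegrable _ _
            · exact intervalIntegrable_const
            · exact hbd
        _ = C^2 * h ^ (2*β) := by simp
    -- factor lower bound
    have hfac : ∀ n ∈ v, ‖c n.1‖^2 ≤ ‖fourierCoeff (hgper.lift : AddCircle (1:ℝ) → ℂ) n.1‖^2 := by
      intro n hn
      rw [hd n.1, norm_mul]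
      have hm0 : n.1.natAbs ≠ 0 := Int.natAbs_ne_zero.mpr n.2
      have hlow : (2:ℕ)^j ≤ n.1.natAbs := by
        rw [← hv n hn]; exact Nat.pow_log_le_self 2 hm0
      have hhig : n.1.natAbs < (2:ℕ)^(j+1) := by
        rw [← hv n hn]; exact Nat.lt_pow_succ_log_self (by norm_num) _
      set θ : ℝ := (n.1:ℝ) * h with hθ
      have hcast : |(n.1 : ℝ)| = (n.1.natAbs : ℝ) := by
        push_cast [Nat.cast_natAbs]
        ring
      have habsθ : |θ| = (n.1.natAbs : ℝ) * h := by
        rw [hθ, abs_mul, abs_of_pos hh0, hcast]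
      have hrw : (2:ℝ)^j * ((3:ℝ) * 2^j)⁻¹ = 1/3 := by
        field_simp
      have h2j : (0:ℝ) < 2^j := by positivity
      have hquarter : (1:ℝ)/4 ≤ |θ| := by
        rw [habsθ, hh]
        have h1 : ((2:ℝ)^j) ≤ (n.1.natAbs : ℝ) := by exact_mod_cast hlow
        calc (1:ℝ)/4 ≤ (2:ℝ)^j * ((3:ℝ)*2^j)⁻¹ := by rw [hrw]; norm_num
          _ ≤ (n.1.natAbs:ℝ) * ((3:ℝ)*2^j)⁻¹ := by
              apply mul_le_mul_of_nonneg_right h1 (by positivity)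
      have hthreequarter : |θ| ≤ 3/4 := by
        rw [habsθ, hh]
        have h1 : (n.1.natAbs : ℝ) ≤ 2 * 2^j := by
          have : (n.1.natAbs : ℝ) < (2:ℝ)^(j+1) := by exact_mod_cast hhig
          rw [pow_succ] at this
          linarith
        have hrw2 : (2:ℝ) * 2^j * ((3:ℝ) * 2^j)⁻¹ = 2/3 := by field_simp
        calc (n.1.natAbs:ℝ) * ((3:ℝ)*2^j)⁻¹ ≤ (2 * 2^j) * ((3:ℝ)*2^j)⁻¹ :=
              mul_le_mul_of_nonneg_right h1 (by positivity)
          _ = 2/3 := hrw2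
          _ ≤ 3/4 := by norm_num
      have hcos : Real.cos (2 * Real.pi * θ) ≤ 0 := by
        rw [show 2 * Real.pi * θ = 2 * Real.pi * θ from rfl, ← Real.cos_abs]
        apply Real.cos_nonpos_of_pi_div_two_le_of_le
        · rw [abs_mul, abs_of_pos (by positivity : (0:ℝ) < 2 * Real.pi)]
          nlinarith [Real.pi_pos]
        · rw [abs_mul, abs_of_pos (by positivity : (0:ℝ) < 2 * Real.pi)]
          nlinarith [Real.pi_pos]
      have hge1 : 1 ≤ ‖e θ - 1‖ := by
        have hre : (e θ - 1).re = Real.cos (2 * Real.pi * θ) - 1 := by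
          simp [e_re]
        calc (1:ℝ) ≤ |(e θ - 1).re| := by
              rw [hre, abs_of_nonpos (by linarith)]; linarith
          _ ≤ ‖e θ - 1‖ := Complex.abs_re_le_norm _
      calc ‖c n.1‖^2 = 1 * ‖c n.1‖^2 := by ring
        _ ≤ ‖e θ - 1‖^2 * ‖c n.1‖^2 := by
            apply mul_le_mul_of_nonneg_right _ (sq_nonneg _)
            nlinarith
        _ = (‖e θ - 1‖ * ‖c n.1‖)^2 := by ring
    -- weight bound
    have hwt : ∀ n ∈ v, ((|n.1| : ℤ) : ℝ) ^ (2 * α) ≤ a * a ^ j := by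
      intro n hn
      have hhig : n.1.natAbs < (2:ℕ)^(j+1) := by
        rw [← hv n hn]; exact Nat.lt_pow_succ_log_self (by norm_num) _
      have h1 : ((|n.1| : ℤ) : ℝ) ≤ (2:ℝ)^(j+1) := by
        rw [Int.abs_eq_natAbs]
        exact_mod_cast hhig.le
      calc ((|n.1| : ℤ) : ℝ) ^ (2 * α) ≤ ((2:ℝ)^(j+1)) ^ (2*α) := by
            apply Real.rpow_le_rpow (by positivity) h1 (by positivity)
        _ = a ^ (j+1) := keya (j+1)
        _ = a * a ^ j := by rw [pow_succ]; ring
    -- h bound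
    have hhb : h ^ (2*β) ≤ (b ^ j)⁻¹ := by
      have h1 : h ≤ ((2:ℝ)^j)⁻¹ := by
        rw [hh]
        apply inv_anti₀ (by positivity)
        nlinarith [pow_pos (show (0:ℝ) < 2 by norm_num) j]
      calc h ^ (2*β) ≤ (((2:ℝ)^j)⁻¹) ^ (2*β) :=
            Real.rpow_le_rpow hh0.le h1 (by positivity)
        _ = (b ^ j)⁻¹ := by
            rw [Real.inv_rpow (by positivity), keyb j]
    -- combine
    have hsumv : ∑ n ∈ v, ‖fourierCoeff (hgper.lift : AddCircle (1:ℝ) → ℂ) n.1‖^2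
        ≤ ∑' m : ℤ, ‖fourierCoeff (hgper.lift : AddCircle (1:ℝ) → ℂ) m‖^2 := by
      rw [show (∑ n ∈ v, ‖fourierCoeff (hgper.lift : AddCircle (1:ℝ) → ℂ) n.1‖^2)
          = ∑ m ∈ v.map (Function.Embedding.subtype _),
              ‖fourierCoeff (hgper.lift : AddCircle (1:ℝ) → ℂ) m‖^2 from
        (Finset.sum_map v (Function.Embedding.subtype _)
          (fun m => ‖fourierCoeff (hgper.lift : AddCircle (1:ℝ) → ℂ) m‖^2)).symm]
      exact Summable.sum_le_tsum _ (fun m _ => by positivity) hsum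
    calc ∑ n ∈ v, ((|n.1| : ℤ) : ℝ) ^ (2 * α) * ‖c n.1‖ ^ 2
        ≤ ∑ n ∈ v, (a * a^j) * ‖fourierCoeff (hgper.lift : AddCircle (1:ℝ) → ℂ) n.1‖^2 :=
          Finset.sum_le_sum fun n hn =>
            mul_le_mul (hwt n hn) (hfac n hn) (sq_nonneg _) (by positivity)
      _ = (a * a^j) * ∑ n ∈ v, ‖fourierCoeff (hgper.lift : AddCircle (1:ℝ) → ℂ) n.1‖^2 := by
          rw [Finset.mul_sum]
      _ ≤ (a * a^j) * (C^2 * h ^ (2*β)) := by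
          apply mul_le_mul_of_nonneg_left _ (by positivity)
          exact le_trans hsumv (by rw [htsum]; exact hib)
      _ ≤ (a * a^j) * (C^2 * (b^j)⁻¹) := by
          apply mul_le_mul_of_nonneg_left _ (by positivity)
          exact mul_le_mul_of_nonneg_left hhb (by positivity)
      _ = (a * C^2) * q ^ j := by
          rw [hq, div_pow]
          field_simp
  -- assembly
  have key : ∀ u : Finset {n : ℤ // n ≠ 0},
      ∑ n ∈ u, ((|n.1| : ℤ) : ℝ) ^ (2 * α) * ‖c n.1‖ ^ 2 ≤ ∑' j : ℕ, (a*C^2) * q^j := by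
    intro u
    have hmaps : ∀ x ∈ u, (fun n : {n:ℤ//n≠0} => Nat.log 2 n.1.natAbs) x
        ∈ u.image (fun n : {n:ℤ//n≠0} => Nat.log 2 n.1.natAbs) :=
      fun x hx => Finset.mem_image_of_mem _ hx
    rw [← Finset.sum_fiberwise_of_maps_to hmaps]
    have hgeo : Summable (fun j : ℕ => (a*C^2) * q^j) :=
      (summable_geometric_of_lt_one hq0.le hq1).mul_left _
    refine le_trans (Finset.sum_le_sum fun j _ =>
      block j _ fun n hn => (Finset.mem_filter.1 hn).2) ?_
    exact Summable.sum_le_tsum _ (fun j _ => by positivity) hgeo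
  exact summable_of_sum_le (fun n => by positivity) key
end
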